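/- arXiv:1610.03405 — 10 statements merged into one kernel-verified Lean document; each statement's English description precedes it below -/
import Mathlib

section
/- Let P be a finite atomic lattice and let a, b be distinct atoms of P. Then the sets mi(P) ∩ ⌈a⌉^c and mi(P) ∩ ⌈b⌉^c are distinct, and neither is contained in the other; in particular there exists a meet-irreducible q with q ∈ ⌈a⌉^c and q ∉ ⌈b⌉^c. -/
open scoped Classical

/-- A finite atomic lattice: every element is a join of atoms. -/
def FinAtomicLattice (α : Type*) [Lattice α] [BoundedOrder α] [Fintype α] : Prop :=
  ∀ x : α, ∃ s : Finset α, (∀ a ∈ s, IsAtom a) ∧ x = s.sup id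

/-- `x` is meet-irreducible: it is not the meet of two strictly larger elements. -/
def MeetIrred {α : Type*} [Lattice α] (x : α) : Prop :=
  ¬ ∃ a b, x < a ∧ x < b ∧ x = a ⊓ b

lemma exists_mi {α : Type*} [Lattice α] [BoundedOrder α] [Fintype α]
    {a b : α} (hnab : ¬ a ≤ b) :
    ∃ q : α, MeetIrred q ∧ ¬ a ≤ q ∧ b ≤ q := by
  classical
  obtain ⟨q, hqS, hqmax⟩ : ∃ q ∈ Finset.univ.filter (fun y => b ≤ y ∧ ¬ a ≤ y),
      ∀ x ∈ Finset.univ.filter (fun y => b ≤ y ∧ ¬ a ≤ y), ¬ q < x := by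
    obtain ⟨q, hq⟩ := Finset.exists_maximal (s :=
      (Finset.univ.filter (fun y => b ≤ y ∧ ¬ a ≤ y)))
      ⟨b, by simp [hnab]⟩
    exact ⟨q, hq.1, fun x hx hlt => hlt.not_ge (hq.2 hx hlt.le)⟩
  simp only [Finset.mem_filter, Finset.mem_univ, true_and] at hqS
  obtain ⟨hbq, haq⟩ := hqS
  refine ⟨q, ?_, haq, hbq⟩
  rintro ⟨u, v, hu, hv, rfl⟩
  have hau : a ≤ u := by
    by_contra hx
    exact hqmax u (by simp [le_trans hbq hu.le, hx]) hu
  have hav : a ≤ v := by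
    by_contra hx
    exact hqmax v (by simp [le_trans hbq hv.le, hx]) hv
  exact haq (le_inf hau hav)

/-- For distinct atoms `a, b`, the sets `mi(P) ∩ ⌈a⌉ᶜ` and `mi(P) ∩ ⌈b⌉ᶜ` are
distinct and neither is contained in the other; in particular there is a
meet-irreducible `q` with `q ∈ ⌈a⌉ᶜ` and `q ∉ ⌈b⌉ᶜ`. -/
theorem stmt2 {α : Type*} [Lattice α] [BoundedOrder α] [Fintype α]
    (h : FinAtomicLattice α) {a b : α} (ha : IsAtom a) (hb : IsAtom b) (hab : a ≠ b) :
    ({x | MeetIrred x ∧ ¬ a ≤ x} : Set α) ≠ {x | MeetIrred x ∧ ¬ b ≤ x} ∧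
    ¬ ({x | MeetIrred x ∧ ¬ a ≤ x} : Set α) ⊆ {x | MeetIrred x ∧ ¬ b ≤ x} ∧
    ¬ ({x | MeetIrred x ∧ ¬ b ≤ x} : Set α) ⊆ {x | MeetIrred x ∧ ¬ a ≤ x} ∧
    ∃ q : α, MeetIrred q ∧ ¬ a ≤ q ∧ b ≤ q := by
  have hnab : ¬ a ≤ b := fun hle => hab ((hb.le_iff.mp hle).resolve_left ha.1)
  have hnba : ¬ b ≤ a := fun hle => hab ((ha.le_iff.mp hle).resolve_left hb.1).symm
  obtain ⟨q, hq, haq, hbq⟩ := exists_mi hnab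
  obtain ⟨r, hr, hbr, har⟩ := exists_mi hnba
  refine ⟨?_, ?_, ?_, q, hq, haq, hbq⟩
  · intro heq
    have : q ∈ ({x | MeetIrred x ∧ ¬ b ≤ x} : Set α) := heq ▸ ⟨hq, haq⟩
    exact this.2 hbq
  · intro hsub
    exact (hsub ⟨hq, haq⟩).2 hbq
  · intro hsub
    exact (hsub ⟨hr, hbr⟩).2 har
end

section
/- A finite atomic lattice P is super-atomic if and only if for every p ∈ P that is neither 0 nor an atom, there exist atoms p₁, p₂ with p = p₁ ∨ p₂ such that both supp(p) − {p₁} and supp(p) − {p₂} belong to S_P = {supp(q) : q ∈ P}. -/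
open scoped Classical

/-- `P` is super-atomic: for every `p` which is neither `⊥` nor an atom and
every set `T` of atoms with `⋁T = p`, there are exactly two elements
`a, b ∈ T` with `a ⊔ b = p`. -/
def SuperAtomic (α : Type*) [Lattice α] [OrderBot α] : Prop :=
  ∀ p : α, p ≠ ⊥ → ¬ IsAtom p →
    ∀ T : Finset α, (∀ a ∈ T, IsAtom a) → T.sup id = p →
      ∃ a ∈ T, ∃ b ∈ T, a ≠ b ∧ a ⊔ b = p ∧
        ∀ c ∈ T, ∀ d ∈ T, c ≠ d → c ⊔ d = p → ({c, d} : Set α) = {a, b}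

/-- The support of `p`: the set of atoms below `p`. -/
def Supp {α : Type*} [Lattice α] [OrderBot α] (p : α) : Set α :=
  {a | IsAtom a ∧ a ≤ p}

/-- A finite atomic lattice `P` is super-atomic iff every `p` which is neither
`⊥` nor an atom is the join of two atoms `p₁, p₂` such that both
`supp(p) − {p₁}` and `supp(p) − {p₂}` are supports of elements of `P`. -/
theorem stmt6 {α : Type*} [Lattice α] [BoundedOrder α] [Fintype α]
    (h : FinAtomicLattice α) :
    SuperAtomic α ↔
      ∀ p : α, p ≠ ⊥ → ¬ IsAtom p →
        ∃ p₁ p₂ : α, IsAtom p₁ ∧ IsAtom p₂ ∧ p = p₁ ⊔ p₂ ∧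
          (∃ q : α, Supp q = Supp p \ {p₁}) ∧
          (∃ q : α, Supp q = Supp p \ {p₂}) := by
  classical
  constructor
  · intro hS p hp hatom
    set T : Finset α := Finset.univ.filter (fun a : α => IsAtom a ∧ a ≤ p) with hTdef
    have hmemT : ∀ x : α, x ∈ T ↔ IsAtom x ∧ x ≤ p := by
      intro x; simp [hTdef]
    have hT : ∀ a ∈ T, IsAtom a := fun a ha => ((hmemT a).1 ha).1
    have hsup : T.sup id = p := by
      apply le_antisymm
      · exact Finset.sup_le fun a ha => ((hmemT a).1 ha).2
      · obtain ⟨s, hs1, hs2⟩ := h p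
        calc p = s.sup id := hs2
          _ ≤ T.sup id := Finset.sup_mono (fun a ha =>
            (hmemT a).2 ⟨hs1 a ha, hs2 ▸ Finset.le_sup (f := id) ha⟩)
    obtain ⟨a, haT, b, hbT, hab, habp, huniq⟩ := hS p hp hatom T hT hsup
    have key : ∀ x, x ∈ ({a, b} : Set α) → x ∈ T → ∃ q, Supp q = Supp p \ {x} := by
      intro x hx hxT
      refine ⟨(T.erase x).sup id, ?_⟩
      have hqle : (T.erase x).sup id ≤ p :=
        Finset.sup_le fun c hc => ((hmemT c).1 (Finset.mem_of_mem_erase hc)).2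
      have hqne : (T.erase x).sup id ≠ p := by
        intro he
        obtain ⟨c, hc, d, hd, hcd, hcdp, -⟩ := hS p hp hatom (T.erase x)
          (fun y hy => hT y (Finset.mem_of_mem_erase hy)) he
        have heq := huniq c (Finset.mem_of_mem_erase hc) d (Finset.mem_of_mem_erase hd) hcd hcdp
        have hxcd : x ∈ ({c, d} : Set α) := by rw [heq]; exact hx
        simp only [Set.mem_insert_iff, Set.mem_singleton_iff] at hxcd
        rcases hxcd with h1 | h1
        · exact (Finset.ne_of_mem_erase hc) h1.symm
        · exact (Finset.ne_of_mem_erase hd) h1.symm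
      have hxq : ¬ x ≤ (T.erase x).sup id := by
        intro hle
        apply hqne
        refine le_antisymm hqle ?_
        rw [← hsup]
        apply Finset.sup_le
        intro c hc
        by_cases hcx : c = x
        · subst hcx; exact hle
        · exact Finset.le_sup (f := id) (Finset.mem_erase.mpr ⟨hcx, hc⟩)
      ext y
      simp only [Supp, Set.mem_setOf_eq, Set.mem_diff, Set.mem_singleton_iff]
      constructor
      · rintro ⟨hy, hyq⟩
        refine ⟨⟨hy, hyq.trans hqle⟩, ?_⟩
        rintro rfl; exact hxq hyq
      · rintro ⟨⟨hy, hyp⟩, hyx⟩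
        exact ⟨hy, Finset.le_sup (f := id)
          (Finset.mem_erase.mpr ⟨hyx, (hmemT y).2 ⟨hy, hyp⟩⟩)⟩
    exact ⟨a, b, hT a haT, hT b hbT, habp.symm,
      key a (by simp) haT, key b (by simp) hbT⟩
  · intro hR p hp hatom T hT hTsup
    obtain ⟨p₁, p₂, h1, h2, hpeq, ⟨q₁, hq₁⟩, ⟨q₂, hq₂⟩⟩ := hR p hp hatom
    have hne : p₁ ≠ p₂ := by
      rintro rfl
      rw [sup_idem] at hpeq
      exact hatom (hpeq ▸ h1)
    have hmem : ∀ (x q : α), Supp q = Supp p \ {x} → x ≤ p → IsAtom x → x ∈ T := by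
      intro x q hq hxp hx
      by_contra hxT
      have hTq : ∀ t ∈ T, t ≤ q := by
        intro t ht
        have htq : t ∈ Supp q := by
          rw [hq]
          exact ⟨⟨hT t ht, hTsup ▸ Finset.le_sup (f := id) ht⟩,
            fun he => hxT ((Set.mem_singleton_iff.1 he) ▸ ht)⟩
        exact htq.2
      have hpq : p ≤ q := hTsup ▸ Finset.sup_le hTq
      have hxq : x ∈ Supp q := ⟨hx, hxp.trans hpq⟩
      rw [hq] at hxq
      exact hxq.2 rfl
    have hp₁T := hmem p₁ q₁ hq₁ (hpeq ▸ le_sup_left) h1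
    have hp₂T := hmem p₂ q₂ hq₂ (hpeq ▸ le_sup_right) h2
    refine ⟨p₁, hp₁T, p₂, hp₂T, hne, hpeq.symm, ?_⟩
    intro c hc d hd hcd hcdp
    have hin : ∀ (x q : α), Supp q = Supp p \ {x} → x ≤ p → IsAtom x →
        x = c ∨ x = d := by
      intro x q hq hxp hx
      by_contra hcon
      push_neg at hcon
      have hcq : c ≤ q := by
        have : c ∈ Supp q := by
          rw [hq]
          exact ⟨⟨hT c hc, hTsup ▸ Finset.le_sup (f := id) hc⟩,
            fun he => hcon.1 (Set.mem_singleton_iff.1 he).symm⟩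
        exact this.2
      have hdq : d ≤ q := by
        have : d ∈ Supp q := by
          rw [hq]
          exact ⟨⟨hT d hd, hTsup ▸ Finset.le_sup (f := id) hd⟩,
            fun he => hcon.2 (Set.mem_singleton_iff.1 he).symm⟩
        exact this.2
      have hpq : p ≤ q := hcdp ▸ sup_le hcq hdq
      have hxq : x ∈ Supp q := ⟨hx, hxp.trans hpq⟩
      rw [hq] at hxq
      exact hxq.2 rfl
    have hc1 := hin p₁ q₁ hq₁ (hpeq ▸ le_sup_left) h1
    have hc2 := hin p₂ q₂ hq₂ (hpeq ▸ le_sup_right) h2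
    rcases hc1 with rfl | rfl <;> rcases hc2 with rfl | rfl
    · exact absurd rfl hne
    · rfl
    · exact Set.pair_comm _ _
    · exact absurd rfl hne
end

section
/- Every finite super-atomic lattice on n atoms (n ≥ 2) has cardinality exactly C(n,2) + n + 1, i.e., n(n−1)/2 + n + 1 elements. -/
open scoped Classical

section Aux
variable {α : Type*} [Lattice α] [BoundedOrder α]

lemma join_ne_bot {a b : α} (ha : IsAtom a) : a ⊔ b ≠ ⊥ := by
  intro h
  exact ha.1 (le_bot_iff.mp (h ▸ le_sup_left))

lemma join_not_atom {a b : α} (ha : IsAtom a) (hb : IsAtom b) (hab : a ≠ b) :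
    ¬ IsAtom (a ⊔ b) := by
  intro hp
  have h1 : a = a ⊔ b := by
    rcases lt_or_eq_of_le (le_sup_left : a ≤ a ⊔ b) with h | h
    · exact absurd (hp.2 a h) ha.1
    · exact h
  have h2 : b = a ⊔ b := by
    rcases lt_or_eq_of_le (le_sup_right : b ≤ a ⊔ b) with h | h
    · exact absurd (hp.2 b h) hb.1
    · exact h
  exact hab (h1.trans h2.symm)

lemma pair_unique (hsa : SuperAtomic α) {a b c d : α}
    (ha : IsAtom a) (hb : IsAtom b) (hc : IsAtom c) (hd : IsAtom d)
    (hab : a ≠ b) (hcd : c ≠ d) (heq : a ⊔ b = c ⊔ d) :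
    ({a, b} : Finset α) = {c, d} := by
  set p := a ⊔ b with hp
  have hpne : p ≠ ⊥ := join_ne_bot ha
  have hpna : ¬ IsAtom p := join_not_atom ha hb hab
  have hT : ∀ x ∈ ({a, b, c, d} : Finset α), IsAtom x := by
    intro x hx
    simp only [Finset.mem_insert, Finset.mem_singleton] at hx
    rcases hx with rfl | rfl | rfl | rfl <;> assumption
  have hsup : ({a, b, c, d} : Finset α).sup id = p := by
    have : ({a, b, c, d} : Finset α).sup id = a ⊔ (b ⊔ (c ⊔ d)) := by
      simp [Finset.sup_insert]
    rw [this, ← heq, hp]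
    simp [sup_assoc, sup_comm, sup_left_comm]
  obtain ⟨a', _, b', _, hab', hjoin', huniq⟩ := hsa p hpne hpna _ hT hsup
  have m : ∀ x : α, x ∈ ({a,b,c,d} : Finset α) ↔ x = a ∨ x = b ∨ x = c ∨ x = d := by
    intro x; simp
  have e1 : ({a, b} : Set α) = {a', b'} :=
    huniq a (by simp) b (by simp) hab rfl
  have e2 : ({c, d} : Set α) = {a', b'} :=
    huniq c (by simp) d (by simp) hcd heq.symm
  have e3 : ({a, b} : Set α) = {c, d} := e1.trans e2.symm
  ext x
  simp only [Finset.mem_insert, Finset.mem_singleton]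
  have := Set.ext_iff.mp e3 x
  simpa using this

end Aux

/-- A finite super-atomic lattice with `n ≥ 2` atoms has exactly
`C(n,2) + n + 1 = n(n−1)/2 + n + 1` elements. -/
theorem stmt7 {α : Type*} [Lattice α] [BoundedOrder α] [Fintype α]
    (h : FinAtomicLattice α) (hsa : SuperAtomic α) (n : ℕ) (hn : 2 ≤ n)
    (hatoms : (Finset.univ.filter (fun a : α => IsAtom a)).card = n) :
    Fintype.card α = n * (n - 1) / 2 + n + 1 := by
  classical
  set A : Finset α := Finset.univ.filter (fun a : α => IsAtom a) with hA
  set J : Finset α := Finset.univ.filter (fun p : α => p ≠ ⊥ ∧ ¬ IsAtom p) with hJ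
  -- J bijects with 2-element subsets of A
  have hJcard : J.card = (A.powersetCard 2).card := by
    apply Finset.card_bij (fun (s : Finset α) _ => s.sup id) ?_ ?_ ?_ |>.symm
    · -- maps into J
      intro s hs
      rw [Finset.mem_powersetCard] at hs
      obtain ⟨hsub, hcard⟩ := hs
      obtain ⟨a, b, hab, rfl⟩ := Finset.card_eq_two.mp hcard
      have ha : IsAtom a := (Finset.mem_filter.mp (hsub (by simp))).2
      have hb : IsAtom b := (Finset.mem_filter.mp (hsub (by simp))).2
      show ({a, b} : Finset α).sup id ∈ J
      have : ({a, b} : Finset α).sup id = a ⊔ b := by simp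
      rw [this]
      simp only [hJ, Finset.mem_filter, Finset.mem_univ, true_and]
      exact ⟨join_ne_bot ha, join_not_atom ha hb hab⟩
    · -- injective
      intro s hs t ht heq
      rw [Finset.mem_powersetCard] at hs ht
      obtain ⟨hsub, hcard⟩ := hs
      obtain ⟨a, b, hab, rfl⟩ := Finset.card_eq_two.mp hcard
      obtain ⟨tsub, tcard⟩ := ht
      obtain ⟨c, d, hcd, rfl⟩ := Finset.card_eq_two.mp tcard
      have ha : IsAtom a := (Finset.mem_filter.mp (hsub (by simp))).2
      have hb : IsAtom b := (Finset.mem_filter.mp (hsub (by simp))).2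
      have hc : IsAtom c := (Finset.mem_filter.mp (tsub (by simp))).2
      have hd : IsAtom d := (Finset.mem_filter.mp (tsub (by simp))).2
      have heq' : a ⊔ b = c ⊔ d := by simpa using heq
      exact pair_unique hsa ha hb hc hd hab hcd heq'
    · -- surjective
      intro p hp
      simp only [hJ, Finset.mem_filter, Finset.mem_univ, true_and] at hp
      obtain ⟨hpne, hpna⟩ := hp
      obtain ⟨T, hTatoms, rfl⟩ := h p
      obtain ⟨a, haT, b, hbT, hab, hjoin, _⟩ := hsa _ hpne hpna T hTatoms rfl
      refine ⟨{a, b}, ?_, ?_⟩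
      · rw [Finset.mem_powersetCard]
        constructor
        · intro x hx
          simp only [Finset.mem_insert, Finset.mem_singleton] at hx
          rcases hx with rfl | rfl <;>
            simp [hA, hTatoms _ haT, hTatoms _ hbT]
        · exact Finset.card_pair hab
      · simpa using hjoin
  have hpow : (A.powersetCard 2).card = n.choose 2 := by
    rw [Finset.card_powersetCard, hatoms]
  -- partition univ
  have hdisj : ∀ x : α, x = ⊥ ∨ IsAtom x ∨ (x ≠ ⊥ ∧ ¬ IsAtom x) := by
    intro x
    by_cases h1 : x = ⊥
    · exact Or.inl h1
    by_cases h2 : IsAtom x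
    · exact Or.inr (Or.inl h2)
    · exact Or.inr (Or.inr ⟨h1, h2⟩)
  have hunion : (Finset.univ : Finset α) = {⊥} ∪ A ∪ J := by
    ext x
    simp only [Finset.mem_univ, true_iff, Finset.mem_union, Finset.mem_singleton,
      hA, hJ, Finset.mem_filter, Finset.mem_univ, true_and]
    rcases hdisj x with h1 | h2 | h3
    · exact Or.inl (Or.inl h1)
    · exact Or.inl (Or.inr h2)
    · exact Or.inr h3
  have d1 : Disjoint ({⊥} : Finset α) A := by
    simp only [Finset.disjoint_singleton_left, hA, Finset.mem_filter]
    rintro ⟨-, hbot⟩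
    exact hbot.1 rfl
  have d2 : Disjoint (({⊥} : Finset α) ∪ A) J := by
    rw [Finset.disjoint_union_left]
    constructor
    · simp only [Finset.disjoint_singleton_left, hJ, Finset.mem_filter]
      rintro ⟨-, hne, -⟩
      exact hne rfl
    · rw [Finset.disjoint_left]
      intro x hx hxJ
      simp only [hA, Finset.mem_filter] at hx
      simp only [hJ, Finset.mem_filter] at hxJ
      exact hxJ.2.2 hx.2
  have : Fintype.card α = 1 + n + J.card := by
    rw [← Finset.card_univ, hunion, Finset.card_union_of_disjoint d2,
      Finset.card_union_of_disjoint d1]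
    simp [hatoms]
  rw [this, hJcard, hpow, Nat.choose_two_right]
  omega
end

section
/- Let P be a finite super-atomic lattice. Then every element p of P that is neither 0 nor an atom is the join of exactly one (unordered) pair of atoms: there exist atoms a, b with p = a ∨ b, and if also p = c ∨ d for atoms c, d then {c, d} = {a, b}. -/
open scoped Classical

/-- In a finite super-atomic lattice, every element that is neither `⊥` nor an
atom is the join of exactly one unordered pair of atoms. -/
theorem stmt8 {α : Type*} [Lattice α] [BoundedOrder α] [Fintype α]
    (h : FinAtomicLattice α) (hsa : SuperAtomic α) :
    ∀ p : α, p ≠ ⊥ → ¬ IsAtom p →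
      ∃ a b : α, IsAtom a ∧ IsAtom b ∧ p = a ⊔ b ∧
        ∀ c d : α, IsAtom c → IsAtom d → p = c ⊔ d →
          ({c, d} : Set α) = {a, b} := by
  intro p hbot hatom
  obtain ⟨T, hTat, hTsup⟩ := h p
  obtain ⟨a, haT, b, hbT, hab, habp, huniq⟩ := hsa p hbot hatom T hTat hTsup.symm
  refine ⟨a, b, hTat a haT, hTat b hbT, habp.symm, ?_⟩
  intro c d hc hd hcd
  have hcd' : c ≠ d := by
    rintro rfl
    simp only [sup_idem] at hcd
    exact hatom (hcd ▸ hc)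
  -- consider T ∪ {c, d}
  set T' : Finset α := insert c (insert d T) with hT'
  have hT'at : ∀ x ∈ T', IsAtom x := by
    intro x hx
    simp only [hT', Finset.mem_insert] at hx
    rcases hx with rfl | rfl | hx
    · exact hc
    · exact hd
    · exact hTat x hx
  have hT'sup : T'.sup id = p := by
    simp only [hT', Finset.sup_insert, id, ← hTsup]
    rw [← sup_assoc, ← hcd]; exact sup_idem p
  obtain ⟨a', ha'T, b', hb'T, hab', habp', huniq'⟩ :=
    hsa p hbot hatom T' hT'at hT'sup
  have h1 : ({a, b} : Set α) = {a', b'} :=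
    huniq' a (by simp [hT', haT]) b (by simp [hT', hbT]) hab habp
  have h2 : ({c, d} : Set α) = {a', b'} :=
    huniq' c (by simp [hT']) d (by simp [hT']) hcd' hcd.symm
  rw [h2, h1]
end

section
/- Let P and Q be finite atomic lattices on the same atom set {1,…,n}, represented as set families S_P ⊋ S_Q (both closed under intersection, containing ∅, all singletons and {1,…,n}) with |S_P| = |S_Q| + 1. If {T} = S_P − S_Q, then T is meet-irreducible in (S_P, ⊆): there is exactly one element of S_P covering T. -/
open scoped Classical

/-- If `S_P ⊋ S_Q` are finite atomic lattices of sets on the same atoms with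
`|S_P| = |S_Q| + 1` and `{T} = S_P − S_Q`, then `T` is meet-irreducible in
`(S_P, ⊆)`: there is exactly one element of `S_P` covering `T`. -/
theorem stmt11 (n : ℕ) (SP SQ : Finset (Finset (Fin n)))
    (hPempty : ∅ ∈ SP) (hPtop : Finset.univ ∈ SP)
    (hPsing : ∀ i : Fin n, ({i} : Finset (Fin n)) ∈ SP)
    (hPinter : ∀ A ∈ SP, ∀ B ∈ SP, A ∩ B ∈ SP)
    (hQempty : ∅ ∈ SQ) (hQtop : Finset.univ ∈ SQ)
    (hQsing : ∀ i : Fin n, ({i} : Finset (Fin n)) ∈ SQ)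
    (hQinter : ∀ A ∈ SQ, ∀ B ∈ SQ, A ∩ B ∈ SQ)
    (hsub : SQ ⊆ SP) (hcard : SP.card = SQ.card + 1)
    (T : Finset (Fin n)) (hT : SP \ SQ = {T}) :
    ∃! C : Finset (Fin n), C ∈ SP ∧ T ⊂ C ∧
      ¬ ∃ D ∈ SP, T ⊂ D ∧ D ⊂ C := by
  have hTmem : T ∈ SP \ SQ := by rw [hT]; exact Finset.mem_singleton_self T
  have hTP : T ∈ SP := (Finset.mem_sdiff.mp hTmem).1
  have hTQ : T ∉ SQ := (Finset.mem_sdiff.mp hTmem).2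
  -- anything in SP other than T is in SQ
  have key : ∀ X ∈ SP, X ≠ T → X ∈ SQ := by
    intro X hX hne
    by_contra hXQ
    have : X ∈ SP \ SQ := Finset.mem_sdiff.mpr ⟨hX, hXQ⟩
    rw [hT, Finset.mem_singleton] at this
    exact hne this
  -- T ≠ univ
  have hTu : T ≠ Finset.univ := fun h => hTQ (h ▸ hQtop)
  -- the set of elements strictly above T
  have hFne : (SP.filter (fun C => T ⊂ C)).Nonempty := by
    refine ⟨Finset.univ, Finset.mem_filter.mpr ⟨hPtop, ?_⟩⟩
    exact lt_of_le_of_ne (Finset.subset_univ T) hTu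
  obtain ⟨C, hCmem, hCmin⟩ := (SP.filter (fun C => T ⊂ C)).exists_min_image
    (fun s => s.card) hFne
  rw [Finset.mem_filter] at hCmem
  obtain ⟨hCP, hTC⟩ := hCmem
  have hCcov : ¬ ∃ D ∈ SP, T ⊂ D ∧ D ⊂ C := by
    rintro ⟨D, hDP, hTD, hDC⟩
    have hDmem : D ∈ SP.filter (fun C => T ⊂ C) := Finset.mem_filter.mpr ⟨hDP, hTD⟩
    have := hCmin D hDmem
    exact absurd this (not_le.mpr (Finset.card_lt_card hDC))
  refine ⟨C, ⟨hCP, hTC, hCcov⟩, ?_⟩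
  rintro C' ⟨hC'P, hTC', hC'cov⟩
  by_contra hne
  -- both C and C' are in SQ
  have hCQ : C ∈ SQ := key C hCP (ne_of_gt hTC)
  have hC'Q : C' ∈ SQ := key C' hC'P (ne_of_gt hTC')
  have hintQ : C' ∩ C ∈ SQ := hQinter _ hC'Q _ hCQ
  have hintP : C' ∩ C ∈ SP := hsub hintQ
  have hTint : T ⊆ C' ∩ C := Finset.subset_inter hTC'.subset hTC.subset
  have hTneint : T ≠ C' ∩ C := by
    intro h; exact hTQ (h ▸ hintQ)
  have hTltint : T ⊂ C' ∩ C := lt_of_le_of_ne hTint hTneint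
  -- C' ∩ C ⊆ C; by cover property of C, C' ∩ C = C, so C ⊆ C'
  have hintC : C' ∩ C = C := by
    by_contra h
    exact hCcov ⟨C' ∩ C, hintP, hTltint,
      lt_of_le_of_ne (Finset.inter_subset_right) h⟩
  have hCC' : C ⊆ C' := hintC ▸ Finset.inter_subset_left
  -- then C ⊂ C', contradicting cover property of C'
  exact hC'cov ⟨C, hCP, hTC, lt_of_le_of_ne hCC' (Ne.symm hne)⟩
end

section
/- Let P be a finite atomic lattice and let a ∨ b = p for atoms a, b, with an atom c ≤ p, c ∉ {a,b}, and suppose P is super-atomic. Then a ∨ c < p and b ∨ c < p. -/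
open scoped Classical

/-- In a finite super-atomic lattice, if `a ⊔ b = p` for atoms `a, b` and `c`
is an atom with `c ≤ p`, `c ∉ {a, b}`, then `a ⊔ c < p` and `b ⊔ c < p`. -/
theorem stmt14 {α : Type*} [Lattice α] [BoundedOrder α] [Fintype α]
    (h : FinAtomicLattice α) (hsa : SuperAtomic α)
    {a b c p : α} (ha : IsAtom a) (hb : IsAtom b) (hc : IsAtom c)
    (hab : a ⊔ b = p) (hcp : c ≤ p) (hca : c ≠ a) (hcb : c ≠ b) :
    a ⊔ c < p ∧ b ⊔ c < p := by
  have hap : a ≤ p := hab ▸ le_sup_left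
  have hbp : b ≤ p := hab ▸ le_sup_right
  have hne : a ≠ b := by
    rintro rfl
    simp only [sup_idem] at hab
    exact hca (ha.le_iff_eq hc.1 |>.mp (hab ▸ hcp))
  have hpb : p ≠ ⊥ := fun hp => ha.1 (le_bot_iff.mp (hp ▸ hap))
  have hpatom : ¬ IsAtom p := by
    intro hp
    exact hne ((hp.le_iff_eq ha.1 |>.mp hap).trans (hp.le_iff_eq hb.1 |>.mp hbp).symm)
  set T : Finset α := {a, b, c} with hT
  have hTatom : ∀ x ∈ T, IsAtom x := by
    intro x hx
    simp only [hT, Finset.mem_insert, Finset.mem_singleton] at hx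
    rcases hx with rfl | rfl | rfl <;> assumption
  have hTsup : T.sup id = p := by
    simp only [hT, Finset.sup_insert, Finset.sup_singleton, id]
    rw [← sup_assoc, hab, sup_eq_left.mpr hcp]
  obtain ⟨a', ha', b', hb', hne', hab', huniq⟩ := hsa p hpb hpatom T hTatom hTsup
  have haT : a ∈ T := by simp [hT]
  have hbT : b ∈ T := by simp [hT]
  have hcT : c ∈ T := by simp [hT]
  have key : ∀ x, IsAtom x → x ∈ T → x ≠ a → x ≠ b → a ⊔ x ≠ p ∧ b ⊔ x ≠ p := by
    intro x hx hxT hxa hxb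
    constructor
    · intro hax
      have h1 := huniq a haT b hbT hne hab
      have h2 := huniq a haT x hxT (Ne.symm hxa) hax
      have : ({a, b} : Set α) = {a, x} := h1.trans h2.symm
      have hx' : x ∈ ({a, b} : Set α) := by rw [this]; right; rfl
      rcases hx' with h | h <;> [exact hxa h; exact hxb h]
    · intro hbx
      have h1 := huniq a haT b hbT hne hab
      have h2 := huniq b hbT x hxT (Ne.symm hxb) hbx
      have : ({a, b} : Set α) = {b, x} := h1.trans h2.symm
      have hx' : x ∈ ({b, x} : Set α) := by right; rfl
      rw [← this] at hx'
      rcases hx' with h | h <;> [exact hxa h; exact hxb h]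
  obtain ⟨h1, h2⟩ := key c hc hcT hca hcb
  exact ⟨lt_of_le_of_ne (sup_le hap hcp) h1, lt_of_le_of_ne (sup_le hbp hcp) h2⟩
end

section
/- Let L(n) denote the set of finite atomic lattices with n ordered atoms, partially ordered by: Q ≤ P iff there is a join-preserving map P → Q that is a bijection on atoms. If P ≥ Q in L(n), then P covers Q if and only if |P| = |Q| + 1. -/
open scoped Classical

/-- A finite atomic lattice on `n` ordered atoms, represented as a family of
subsets of `{1,…,n}` closed under intersection and containing `∅`, all
singletons and the whole set. -/
def GoodFamily (n : ℕ) (S : Finset (Finset (Fin n))) : Prop :=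
  ∅ ∈ S ∧ Finset.univ ∈ S ∧ (∀ i : Fin n, ({i} : Finset (Fin n)) ∈ S) ∧
    ∀ A ∈ S, ∀ B ∈ S, A ∩ B ∈ S

/-- In `L(n)`, for `P ≥ Q` (i.e. `S_Q ⊆ S_P`), `P` covers `Q` iff
`|P| = |Q| + 1`. -/
theorem stmt15 (n : ℕ) (SP SQ : Finset (Finset (Fin n)))
    (hP : GoodFamily n SP) (hQ : GoodFamily n SQ) (hle : SQ ⊆ SP) :
    (SQ ⊂ SP ∧ ∀ R : Finset (Finset (Fin n)),
        GoodFamily n R → SQ ⊂ R → R ⊂ SP → False) ↔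
      SP.card = SQ.card + 1 := by
  constructor
  · rintro ⟨hss, hcov⟩
    obtain ⟨A, hA, hmin⟩ : ∃ A ∈ SP \ SQ, ∀ x ∈ SP \ SQ, ¬ x < A := by
      obtain ⟨A, hA⟩ := Finset.exists_minimal (Finset.sdiff_nonempty.mpr fun h => hss.2 h)
      exact ⟨A, hA.1, fun x hx hlt => (lt_iff_le_not_ge.mp hlt).2 (hA.2 hx (le_of_lt hlt))⟩
    rw [Finset.mem_sdiff] at hA
    set R : Finset (Finset (Fin n)) := insert A SQ with hR
    have hinter : ∀ X ∈ R, ∀ Y ∈ R, X ∩ Y ∈ R := by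
      have key : ∀ B ∈ SQ, A ∩ B ∈ R := by
        intro B hB
        have hAB : A ∩ B ∈ SP := hP.2.2.2 A hA.1 B (hle hB)
        by_cases h : A ∩ B ∈ SQ
        · exact Finset.mem_insert_of_mem h
        · have hmem : A ∩ B ∈ SP \ SQ := Finset.mem_sdiff.mpr ⟨hAB, h⟩
          have hsub : A ∩ B ⊆ A := Finset.inter_subset_left
          have : A ∩ B = A := by
            by_contra hne
            exact hmin _ hmem (lt_of_le_of_ne hsub hne)
          rw [this]; exact Finset.mem_insert_self _ _
      intro X hX Y hY
      rcases Finset.mem_insert.mp hX with hX | hX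
      · rcases Finset.mem_insert.mp hY with hY | hY
        · rw [hX, hY, Finset.inter_self]; exact Finset.mem_insert_self _ _
        · rw [hX]; exact key Y hY
      · rcases Finset.mem_insert.mp hY with hY | hY
        · rw [hY, Finset.inter_comm]; exact key X hX
        · exact Finset.mem_insert_of_mem (hQ.2.2.2 X hX Y hY)
    have hRgood : GoodFamily n R :=
      ⟨Finset.mem_insert_of_mem hQ.1, Finset.mem_insert_of_mem hQ.2.1,
        fun i => Finset.mem_insert_of_mem (hQ.2.2.1 i), hinter⟩
    have hQR : SQ ⊂ R := Finset.ssubset_insert hA.2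
    have hRP : R ⊆ SP := Finset.insert_subset hA.1 hle
    have hReq : R = SP := by
      by_contra hne
      exact hcov R hRgood hQR (lt_of_le_of_ne hRP hne)
    rw [← hReq, hR, Finset.card_insert_of_notMem hA.2]
  · intro hcard
    have hss : SQ ⊂ SP := by
      refine Finset.ssubset_iff_subset_ne.mpr ⟨hle, fun h => ?_⟩
      rw [h] at hcard; omega
    refine ⟨hss, fun R _ h1 h2 => ?_⟩
    have c1 : SQ.card < R.card := Finset.card_lt_card h1
    have c2 : R.card < SP.card := Finset.card_lt_card h2
    omega
end

section
/- Let P be a finite atomic lattice with a labeling M by monomials such that there is a variable x₀ with the property: whenever x₀ divides both m_p and m_q, the elements p and q are comparable. Define x(a) = ∏_{p ∈ ⌈a⌉^c} m_p for each atom a, and Δ(a) = gcd over all joins: Δ(a) = gcd{ lcm{x(b) : b ∈ T} : T ⊆ atoms(P), ⋁T ≥ a }. Then for every atom a, the exponent of x₀ in Δ(a) equals the exponent of x₀ in x(a). -/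
open scoped Classical

/-- The exponent vector of `x(a) = ∏_{p ∈ ⌈a⌉ᶜ} m_p`, for a labeling `m` of
the lattice by monomials (given by exponent vectors over variables `σ`). -/
noncomputable def xval {α : Type*} [Lattice α] [BoundedOrder α] [Fintype α] {σ : Type*}
    (m : α → σ → ℕ) (a : α) : σ → ℕ :=
  fun w => ∑ p ∈ Finset.univ.filter (fun p : α => ¬ a ≤ p), m p w

/-- The exponent vector of
`Δ(a) = gcd{ lcm{x(b) : b ∈ T} : T a set of atoms with ⋁T ≥ a }`. -/
noncomputable def deltaval {α : Type*} [Lattice α] [BoundedOrder α] [Fintype α] {σ : Type*}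
    (m : α → σ → ℕ) (a : α) : σ → ℕ :=
  fun w => sInf {N : ℕ | ∃ T : Finset α, (∀ b ∈ T, IsAtom b) ∧ a ≤ T.sup id ∧
    N = T.sup (fun b => xval m b w)}

/-- If the variable `x₀` only appears in labels along one chain of `P`, then
for every atom `a` the exponent of `x₀` in `Δ(a)` equals its exponent in
`x(a)`. -/
theorem stmt16 {α : Type*} [Lattice α] [BoundedOrder α] [Fintype α] {σ : Type*}
    (h : FinAtomicLattice α) (m : α → σ → ℕ) (x₀ : σ)
    (hchain : ∀ p q : α, 0 < m p x₀ → 0 < m q x₀ → p ≤ q ∨ q ≤ p) :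
    ∀ a : α, IsAtom a → deltaval m a x₀ = xval m a x₀ := by
  intro a ha
  have hmem : xval m a x₀ ∈ {N : ℕ | ∃ T : Finset α, (∀ b ∈ T, IsAtom b) ∧ a ≤ T.sup id ∧
      N = T.sup (fun b => xval m b x₀)} := by
    refine ⟨{a}, ?_, by simp, by simp⟩
    simpa using ha
  apply Nat.le_antisymm
  · exact Nat.sInf_le hmem
  · apply le_csInf ⟨_, hmem⟩
    rintro N ⟨T, hT, hsup, rfl⟩
    -- it suffices to find b ∈ T with xval m a x₀ ≤ xval m b x₀
    have key : ∃ b ∈ T, xval m a x₀ ≤ xval m b x₀ := by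
      by_contra hcon
      push_neg at hcon
      -- for each b ∈ T there is p with positive exponent, ¬ a ≤ p, b ≤ p
      have hex : ∀ b : α, ∃ p : α, b ∈ T → (0 < m p x₀ ∧ ¬ a ≤ p ∧ b ≤ p) := by
        intro b
        by_cases hb : b ∈ T
        · by_contra hno
          push_neg at hno
          have hle : xval m a x₀ ≤ xval m b x₀ := by
            unfold xval
            rw [← Finset.sum_filter_ne_zero (Finset.univ.filter (fun p : α => ¬ a ≤ p))]
            apply Finset.sum_le_sum_of_subset
            intro p hp
            simp only [Finset.mem_filter, Finset.mem_univ, true_and] at hp ⊢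
            intro hbp
            exact (hno p).2 (Nat.pos_of_ne_zero hp.2) hp.1 hbp
          exact absurd hle (not_le.mpr (hcon b hb))
        · exact ⟨⊥, fun hb' => absurd hb' hb⟩
      choose f hf using hex
      have hTne : T.Nonempty := by
        rcases Finset.eq_empty_or_nonempty T with rfl | hne
        · simp only [Finset.sup_empty, le_bot_iff] at hsup
          exact (ha.1 hsup).elim
        · exact hne
      have hne' : (T.image f).Nonempty := hTne.image f
      obtain ⟨p, hpmem, hpmax⟩ : ∃ p ∈ T.image f, ∀ x ∈ T.image f, ¬ p < x := by
        obtain ⟨p, hp⟩ := Finset.exists_maximal hne'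
        exact ⟨p, hp.1, fun x hx hlt => absurd (hp.2 hx hlt.le) (not_le_of_gt hlt)⟩
      obtain ⟨b₀, hb₀, rfl⟩ := Finset.mem_image.mp hpmem
      obtain ⟨hpos₀, hna₀, -⟩ := hf b₀ hb₀
      -- every b ∈ T satisfies b ≤ f b₀
      have hall : ∀ b ∈ T, b ≤ f b₀ := by
        intro b hb
        obtain ⟨hpos, hna, hbp⟩ := hf b hb
        have hcomp := hchain (f b) (f b₀) hpos hpos₀
        rcases hcomp with h1 | h1
        · exact hbp.trans h1
        · have hnl : ¬ f b₀ < f b := hpmax _ (Finset.mem_image_of_mem f hb)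
          have heq : f b₀ = f b := by
            by_contra hne
            exact hnl (lt_of_le_of_ne h1 hne)
          exact heq ▸ hbp
      have : T.sup id ≤ f b₀ := Finset.sup_le fun b hb => hall b hb
      exact hna₀ (hsup.trans this)
    obtain ⟨b, hb, hle⟩ := key
    exact hle.trans (Finset.le_sup (f := fun b => xval m b x₀) hb)
end

section
/- Let P be a finite atomic lattice with a monomial labeling M, and define x(a) and Δ(a) as usual. If p ∈ P, R is a set of atoms with ⋁R = p, and b is an atom with b ≤ p and b ∉ R, then Δ(b) divides lcm{Δ(r) : r ∈ R}. -/
open scoped Classical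

/-- If `R` is a set of atoms with `⋁R = p`, and `b ≤ p` is an atom not in `R`,
then `Δ(b)` divides `lcm{Δ(r) : r ∈ R}` (stated on exponents). -/
theorem stmt17 {α : Type*} [Lattice α] [BoundedOrder α] [Fintype α] {σ : Type*}
    (h : FinAtomicLattice α) (m : α → σ → ℕ) (p : α) (R : Finset α)
    (hR : ∀ r ∈ R, IsAtom r) (hRp : R.sup id = p)
    (b : α) (hb : IsAtom b) (hbp : b ≤ p) (hbR : b ∉ R) :
    ∀ w : σ, deltaval m b w ≤ R.sup (fun r => deltaval m r w) := by
  intro w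
  have key : ∀ r ∈ R, ∃ T : Finset α, (∀ a ∈ T, IsAtom a) ∧ r ≤ T.sup id ∧
      deltaval m r w = T.sup (fun b => xval m b w) := by
    intro r hr
    have hne : {N : ℕ | ∃ T : Finset α, (∀ b ∈ T, IsAtom b) ∧ r ≤ T.sup id ∧
        N = T.sup (fun b => xval m b w)}.Nonempty :=
      ⟨xval m r w, {r}, by simpa using hR r hr, by simp, by simp⟩
    exact Nat.sInf_mem hne
  choose! T hT1 hT2 hT3 using key
  set U : Finset α := R.biUnion T with hU
  have hatoms : ∀ a ∈ U, IsAtom a := by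
    intro a ha
    rcases Finset.mem_biUnion.mp ha with ⟨r, hr, har⟩
    exact hT1 r hr a har
  have hle : b ≤ U.sup id := by
    refine hbp.trans ?_
    rw [← hRp]
    refine Finset.sup_le fun r hr => ?_
    exact le_trans (hT2 r hr) (Finset.sup_mono (Finset.subset_biUnion_of_mem T hr))
  have h1 : deltaval m b w ≤ U.sup (fun b => xval m b w) :=
    Nat.sInf_le ⟨U, hatoms, hle, rfl⟩
  have h2 : U.sup (fun b => xval m b w) = R.sup (fun r => deltaval m r w) := by
    rw [hU, Finset.sup_biUnion]
    exact Finset.sup_congr rfl fun r hr => (hT3 r hr).symm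
  rwa [h2] at h1
end

section
/- Let M be a monomial labeling of a finite atomic lattice P satisfying (A1) all meet-irreducibles are nontrivially labeled and (A2) each variable appears only in labels along one chain of P. Then for all distinct atoms a, b, x(a) ≠ x(b), where x(a) = ∏_{p ∈ ⌈a⌉^c} m_p; in fact x(a) does not divide x(b). -/
open scoped Classical

/-- For a labeling satisfying (A1) (all meet-irreducibles nontrivially
labeled) and (A2) (each variable appears only along one chain), for distinct
atoms `a, b` the monomial `x(a)` does not divide `x(b)`; in particular
`x(a) ≠ x(b)`. -/
theorem stmt19 {α : Type*} [Lattice α] [BoundedOrder α] [Fintype α] {σ : Type*}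
    (h : FinAtomicLattice α) (m : α → σ → ℕ)
    (hA1 : ∀ p : α, MeetIrred p → ∃ w : σ, 0 < m p w)
    (hA2 : ∀ (w : σ) (p q : α), 0 < m p w → 0 < m q w → p ≤ q ∨ q ≤ p)
    {a b : α} (ha : IsAtom a) (hb : IsAtom b) (hab : a ≠ b) :
    ¬ (∀ w : σ, xval m a w ≤ xval m b w) ∧ xval m a ≠ xval m b := by
  -- the set of elements above b but not above a
  set S : Finset α := Finset.univ.filter (fun q : α => b ≤ q ∧ ¬ a ≤ q) with hS
  have hbS : b ∈ S := by
    simp only [hS, Finset.mem_filter, Finset.mem_univ, true_and]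
    refine ⟨le_refl b, fun hle => ?_⟩
    rcases hb.le_iff.mp hle with h0 | h0
    · exact ha.1 h0
    · exact hab h0
  obtain ⟨p, hpS, hpmax⟩ : ∃ p ∈ S, ∀ x ∈ S, ¬ p < x := by
    obtain ⟨p, hp⟩ := Finset.exists_maximal (s := S) ⟨b, hbS⟩
    exact ⟨p, hp.1, fun x hx hlt => lt_irrefl p (hlt.trans_le (hp.2 hx hlt.le))⟩
  simp only [hS, Finset.mem_filter, Finset.mem_univ, true_and] at hpS
  obtain ⟨hbp, hap⟩ := hpS
  -- p is meet-irreducible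
  have hirr : MeetIrred p := by
    rintro ⟨u, v, hu, hv, huv⟩
    have hu' : a ≤ u := by
      by_contra hau
      exact hpmax u (by simp [hS, Finset.mem_filter, hbp.trans hu.le, hau]) hu
    have hv' : a ≤ v := by
      by_contra hav
      exact hpmax v (by simp [hS, Finset.mem_filter, hbp.trans hv.le, hav]) hv
    exact hap (huv ▸ le_inf hu' hv')
  obtain ⟨w, hw⟩ := hA1 p hirr
  -- the key inequality at variable w
  have key : xval m b w < xval m a w := by
    set A : Finset α := Finset.univ.filter (fun q : α => ¬ a ≤ q) with hA
    set B : Finset α := Finset.univ.filter (fun q : α => ¬ b ≤ q) with hB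
    have hpA : p ∈ A := by simp [hA, hap]
    have hBsub : B.filter (fun q => 0 < m q w) ⊆ A.erase p := by
      intro q hq
      simp only [hB, Finset.mem_filter, Finset.mem_univ, true_and] at hq
      obtain ⟨hbq, hmq⟩ := hq
      rcases hA2 w q p hmq hw with hple | hple
      · refine Finset.mem_erase.mpr ⟨fun hqp => hbq (hqp ▸ hbp), ?_⟩
        simp only [hA, Finset.mem_filter, Finset.mem_univ, true_and]
        exact fun haq => hap (haq.trans hple)
      · exact absurd (hbp.trans hple) hbq
    calc xval m b w = ∑ q ∈ B.filter (fun q => 0 < m q w), m q w := by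
          rw [xval]
          exact (Finset.sum_filter_of_ne (fun q _ hne => Nat.pos_of_ne_zero hne)).symm
      _ ≤ ∑ q ∈ A.erase p, m q w := Finset.sum_le_sum_of_subset hBsub
      _ < m p w + ∑ q ∈ A.erase p, m q w := Nat.lt_add_of_pos_left hw
      _ = ∑ q ∈ A, m q w := Finset.add_sum_erase A (fun q => m q w) hpA
      _ = xval m a w := rfl
  refine ⟨fun hle => absurd (hle w) (not_le.mpr key), fun heq => ?_⟩
  exact absurd (heq ▸ le_refl (xval m a w)) (not_le.mpr key)
end
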